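/- arXiv:2202.03387 — 2 statements merged into one kernel-verified Lean document; each statement's English description precedes it below -/
import Mathlib

section
/- For positive integers m, n, the equation C(n+3,4) = 2·C(m+2,4) + C(m+2,3) holds if and only if (2n+3)⁴ - 10(2n+3)² + 9 = 32(m+1)⁴ - 32(m+1)². -/
lemma c2' (a : ℕ) : (a + 1).choose 2 * 2 = a * (a + 1) := by
  induction a with
  | zero => decide
  | succ a ih =>
    rw [Nat.choose_succ_succ, Nat.choose_one_right]
    nlinarith [ih]

lemma c3' (a : ℕ) : (a + 2).choose 3 * 6 = a * (a + 1) * (a + 2) := by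
  induction a with
  | zero => decide
  | succ a ih =>
    rw [Nat.choose_succ_succ]
    nlinarith [ih, c2' (a + 1)]

lemma c4' (a : ℕ) : (a + 3).choose 4 * 24 = a * (a + 1) * (a + 2) * (a + 3) := by
  induction a with
  | zero => decide
  | succ a ih =>
    rw [Nat.choose_succ_succ]
    nlinarith [ih, c3' (a + 1)]

theorem stmt_8 (m n : ℕ) (hm : 0 < m) (hn : 0 < n) :
    Nat.choose (n + 3) 4 = 2 * Nat.choose (m + 2) 4 + Nat.choose (m + 2) 3 ↔
      (2 * (n : ℤ) + 3) ^ 4 - 10 * (2 * (n : ℤ) + 3) ^ 2 + 9 =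
        32 * ((m : ℤ) + 1) ^ 4 - 32 * ((m : ℤ) + 1) ^ 2 := by
  obtain ⟨j, rfl⟩ : ∃ j, m = j + 1 := ⟨m - 1, by omega⟩
  have k1 := c4' n
  have k2 : (j + 1 + 2).choose 4 * 24 = j * (j + 1) * (j + 2) * (j + 3) := by
    have := c4' j; convert this using 2 <;> omega
  have k3 : (j + 1 + 2).choose 3 * 6 = (j + 1) * (j + 2) * (j + 3) := by
    have := c3' (j + 1); convert this using 2 <;> omega
  constructor
  · intro h
    have h24 : (n + 3).choose 4 * 24 = (2 * (j + 1 + 2).choose 4 + (j + 1 + 2).choose 3) * 24 := by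
      rw [h]
    have : (n : ℤ) * (n + 1) * (n + 2) * (n + 3)
        = 2 * (j * (j + 1) * (j + 2) * (j + 3)) + 4 * ((j + 1) * (j + 2) * (j + 3)) := by
      have := congrArg (Nat.cast : ℕ → ℤ) h24
      push_cast [← k1, ← k2, ← k3] at this ⊢
      linarith [this]
    push_cast
    nlinarith [this]
  · intro h
    have hZ : ((n + 3).choose 4 : ℤ) * 24 = (2 * (j + 1 + 2).choose 4 + (j + 1 + 2).choose 3 : ℕ) * 24 := by
      have e1 : ((n + 3).choose 4 : ℤ) * 24 = (n : ℤ) * (n + 1) * (n + 2) * (n + 3) := by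
        exact_mod_cast congrArg (Nat.cast : ℕ → ℤ) k1
      have e2 : ((j + 1 + 2).choose 4 : ℤ) * 24 = (j : ℤ) * (j + 1) * (j + 2) * (j + 3) := by
        exact_mod_cast congrArg (Nat.cast : ℕ → ℤ) k2
      have e3 : ((j + 1 + 2).choose 3 : ℤ) * 6 = ((j : ℤ) + 1) * (j + 2) * (j + 3) := by
        exact_mod_cast congrArg (Nat.cast : ℕ → ℤ) k3
      push_cast at h ⊢
      nlinarith [h, e1, e2, e3]
    have : (n + 3).choose 4 * 24 = (2 * (j + 1 + 2).choose 4 + (j + 1 + 2).choose 3) * 24 := by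
      exact_mod_cast hZ
    omega
end

section
/- The only integer solutions with m, n ≤ 1000 of n(n+1)(n+2)(n+3)(n+4)(n+5) = 2m(m+1)(m+2)²(m+3)(m+4) with m, n ≥ 1 are (n,m) = (1,1) and (n,m) = (11,10). -/
def F (n : ℕ) : ℕ := n * (n + 1) * (n + 2) * (n + 3) * (n + 4) * (n + 5)
def G (m : ℕ) : ℕ := 2 * (m * (m + 1) * (m + 2) ^ 2 * (m + 3) * (m + 4))
def Lb (m : ℕ) : ℕ := 1123 * m / 1000 - 2

lemma Fmono : Monotone F := by
  intro a b h
  unfold F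
  gcongr

set_option maxRecDepth 10000 in
lemma key : ∀ m0 < 1000,
    F (Lb (m0+1)) < G (m0+1) ∧ G (m0+1) < F (Lb (m0+1) + 4) ∧
    ∀ i < 3, (F (Lb (m0+1) + 1 + i) = G (m0+1) →
      ((Lb (m0+1) + 1 + i = 1 ∧ m0+1 = 1) ∨ (Lb (m0+1) + 1 + i = 11 ∧ m0+1 = 10))) := by
  decide

theorem stmt_15 (m n : ℕ) (hm1 : 1 ≤ m) (hm2 : m ≤ 1000) (hn1 : 1 ≤ n) (hn2 : n ≤ 1000) :
    n * (n + 1) * (n + 2) * (n + 3) * (n + 4) * (n + 5) =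
        2 * (m * (m + 1) * (m + 2) ^ 2 * (m + 3) * (m + 4)) ↔
      (n = 1 ∧ m = 1) ∨ (n = 11 ∧ m = 10) := by
  constructor
  · intro h
    obtain ⟨m0, rfl⟩ : ∃ m0, m = m0 + 1 := ⟨m - 1, by omega⟩
    obtain ⟨h1, h2, h3⟩ := key m0 (by omega)
    have hFG : F n = G (m0 + 1) := h
    have hgt : Lb (m0 + 1) < n := by
      by_contra hc
      have := Fmono (le_of_not_gt hc)
      omega
    have hlt : n < Lb (m0 + 1) + 4 := by
      by_contra hc
      have := Fmono (le_of_not_gt hc : Lb (m0 + 1) + 4 ≤ n)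
      omega
    have hi := h3 (n - (Lb (m0 + 1) + 1)) (by omega)
    rw [show Lb (m0+1) + 1 + (n - (Lb (m0+1) + 1)) = n by omega] at hi
    exact hi hFG
  · rintro (⟨rfl, rfl⟩ | ⟨rfl, rfl⟩) <;> norm_num
end
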